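/- Let n ≥ 2 and let a = (a_1,…,a_n) be any vector of nonnegative integers. Suppose y = (y_1,…,y_{n−1}) is a vector of nonnegative real numbers satisfying y_1 ≤ a_1, y_{j−1} + y_j ≤ a_j for each j = 2, …, n−1, and y_{n−1} ≤ a_n. Let h = ⌈y_1 + ⋯ + y_{n−1}⌉. Then the monomial x^a = x_1^{a_1} ⋯ x_n^{a_n} is divisible by a product of h monomials from the set {x_1 x_2, x_2 x_3, …, x_{n−1} x_n}. -/

import Mathlib

/-!
Let `S_t = y_1 + ⋯ + y_t` and take `c_i = ⌈S_i⌉ - ⌈S_{i-1}⌉`. The `c_i` telescope, so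
`∑ c_i = ⌈S_{n-1}⌉`, and any block of consecutive `c_i` sums to `⌈S_j⌉ - ⌈S_i⌉ ≤ A` whenever the
corresponding block of `y_i` is bounded by an integer `A`, because `⌈S_i + A⌉ = ⌈S_i⌉ + A`.
Applied to the blocks `{j - 1, j}` this gives `c_{j-1} + c_j ≤ a_j`, which is exactly the
exponent of `x_j` needed for `∏ (x_i x_{i+1})^{c_i}` to divide `x^a`.
-/

open MvPolynomial Finset

section PathProduct

variable {M : Type*} [CommMonoid M]

theorem prod_Icc_mul_succ_pow (x : ℕ → M) (c : ℕ → ℕ) (hc : c 0 = 0) (m : ℕ) :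
    ∏ i ∈ Icc 1 m, (x i * x (i + 1)) ^ c i =
      (∏ j ∈ Icc 1 m, x j ^ (c (j - 1) + c j)) * x (m + 1) ^ c m := by
  induction m with
  | zero => simp [hc]
  | succ m ih =>
    rw [prod_Icc_succ_top (by omega), ih, prod_Icc_succ_top (by omega), Nat.add_sub_cancel,
      mul_pow, pow_add]
    ac_rfl

theorem prod_Icc_mul_succ_pow_dvd (x : ℕ → M) (c a : ℕ → ℕ) (hc : c 0 = 0) (m : ℕ)
    (hinner : ∀ j ∈ Icc 1 m, c (j - 1) + c j ≤ a j) (hlast : c m ≤ a (m + 1)) :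
    ∏ i ∈ Icc 1 m, (x i * x (i + 1)) ^ c i ∣ ∏ j ∈ Icc 1 (m + 1), x j ^ a j := by
  rw [prod_Icc_mul_succ_pow x c hc, prod_Icc_succ_top (by omega)]
  exact mul_dvd_mul (prod_dvd_prod_of_dvd _ _ fun j hj => pow_dvd_pow _ (hinner j hj))
    (pow_dvd_pow _ hlast)

end PathProduct

theorem sum_Ioc_self_add_two {M : Type*} [AddCommMonoid M] (f : ℕ → M) (j : ℕ) :
    ∑ k ∈ Ioc j (j + 2), f k = f (j + 1) + f (j + 2) := by
  rw [sum_Ioc_succ_top (by omega), Nat.Ioc_succ_singleton, sum_singleton]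

section RoundedIncrement

noncomputable def roundedIncrement (y : ℕ → ℝ) (i : ℕ) : ℕ :=
  ⌈∑ k ∈ Ioc 0 i, y k⌉₊ - ⌈∑ k ∈ Ioc 0 (i - 1), y k⌉₊

variable {y : ℕ → ℝ} {i j : ℕ}

theorem roundedIncrement_zero (y : ℕ → ℝ) : roundedIncrement y 0 = 0 := by
  simp [roundedIncrement]

theorem ceil_sum_Ioc_zero_mono (hy : ∀ k ∈ Ioc 0 j, 0 ≤ y k) (hij : i ≤ j) :
    ⌈∑ k ∈ Ioc 0 i, y k⌉₊ ≤ ⌈∑ k ∈ Ioc 0 j, y k⌉₊ :=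
  Nat.ceil_mono <| sum_le_sum_of_subset_of_nonneg (Ioc_subset_Ioc_right hij)
    fun k hk _ => hy k hk

theorem sum_Ioc_roundedIncrement (hy : ∀ k ∈ Ioc 0 j, 0 ≤ y k) (hij : i ≤ j) :
    ∑ k ∈ Ioc i j, roundedIncrement y k = ⌈∑ k ∈ Ioc 0 j, y k⌉₊ - ⌈∑ k ∈ Ioc 0 i, y k⌉₊ := by
  induction j, hij using Nat.le_induction with
  | base => simp
  | succ j hij ih =>
    have hy' : ∀ k ∈ Ioc 0 j, 0 ≤ y k := fun k hk => hy k (Ioc_subset_Ioc_right j.le_succ hk)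
    rw [sum_Ioc_succ_top hij, ih hy']
    have := ceil_sum_Ioc_zero_mono hy' hij
    have := ceil_sum_Ioc_zero_mono hy j.le_succ
    simp only [roundedIncrement, Nat.add_sub_cancel]
    omega

theorem sum_Ioc_roundedIncrement_le (hy : ∀ k ∈ Ioc 0 j, 0 ≤ y k) (hij : i ≤ j) {A : ℕ}
    (hA : ∑ k ∈ Ioc i j, y k ≤ A) : ∑ k ∈ Ioc i j, roundedIncrement y k ≤ A := by
  have hpartial : 0 ≤ ∑ k ∈ Ioc 0 i, y k :=
    sum_nonneg fun k hk => hy k (Ioc_subset_Ioc_right hij hk)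
  have hceil : ⌈∑ k ∈ Ioc 0 j, y k⌉₊ ≤ ⌈∑ k ∈ Ioc 0 i, y k⌉₊ + A := by
    rw [← Nat.ceil_add_natCast hpartial, ← sum_Ioc_consecutive y (Nat.zero_le i) hij]
    exact Nat.ceil_mono (by linarith)
  rw [sum_Ioc_roundedIncrement hy hij]
  omega

theorem roundedIncrement_le (hy : ∀ k ∈ Ioc 0 j, 0 ≤ y k) {A : ℕ} (hA : y j ≤ A) :
    roundedIncrement y j ≤ A := by
  cases j with
  | zero => simp [roundedIncrement_zero]
  | succ j =>
    simpa [Nat.Ioc_succ_singleton] using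
      sum_Ioc_roundedIncrement_le hy j.le_succ (A := A) (by simpa [Nat.Ioc_succ_singleton])

theorem roundedIncrement_add_le (hy : ∀ k ∈ Ioc 0 (j + 2), 0 ≤ y k) {A : ℕ}
    (hA : y (j + 1) + y (j + 2) ≤ A) :
    roundedIncrement y (j + 1) + roundedIncrement y (j + 2) ≤ A := by
  have := sum_Ioc_roundedIncrement_le hy (j.le_add_right 2) (A := A) (by rwa [sum_Ioc_self_add_two])
  rwa [sum_Ioc_self_add_two] at this

end RoundedIncrement

theorem divisible_of_path_system_general
    (K : Type*) [Field K] (n : ℕ)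
    (a : ℕ → ℕ) (y : ℕ → ℝ)
    (hy0 : ∀ i ∈ Finset.Icc 1 (n - 1), 0 ≤ y i)
    (hy1 : y 1 ≤ (a 1 : ℝ))
    (hy2 : ∀ j ∈ Finset.Icc 2 (n - 1), y (j - 1) + y j ≤ (a j : ℝ))
    (hy3 : y (n - 1) ≤ (a n : ℝ)) :
    ∃ c : ℕ → ℕ,
      (∑ i ∈ Finset.Icc 1 (n - 1), c i = ⌈∑ i ∈ Finset.Icc 1 (n - 1), y i⌉₊) ∧
      (∏ i ∈ Finset.Icc 1 (n - 1), ((X i * X (i + 1) : MvPolynomial ℕ K) ^ c i)) ∣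
        ∏ i ∈ Finset.Icc 1 n, (X i : MvPolynomial ℕ K) ^ a i := by
  cases n with
  | zero => exact ⟨0, by simp, by simp⟩
  | succ m =>
    rw [Nat.add_sub_cancel] at hy0 hy2 hy3 ⊢
    have hIcc : Icc 1 m = Ioc 0 m := Icc_add_one_left_eq_Ioc 0 m
    rw [hIcc] at hy0
    have hy : ∀ {j}, j ≤ m → ∀ k ∈ Ioc 0 j, 0 ≤ y k := fun hj k hk =>
      hy0 k (Ioc_subset_Ioc_right hj hk)
    refine ⟨roundedIncrement y, ?_, prod_Icc_mul_succ_pow_dvd _ _ _ (roundedIncrement_zero y) m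
      ?_ (roundedIncrement_le (hy le_rfl) hy3)⟩
    · simp [hIcc, sum_Ioc_roundedIncrement hy0 (Nat.zero_le m)]
    · intro j hj
      obtain ⟨hj1, hjm⟩ := mem_Icc.mp hj
      rcases j with _ | _ | j
      · omega
      · simpa [roundedIncrement_zero] using roundedIncrement_le (hy hjm) hy1
      · exact roundedIncrement_add_le (hy hjm) (hy2 (j + 2) (mem_Icc.mpr ⟨by omega, hjm⟩))

/-- Theorem 4.6: let `n ≥ 2` and `a = (a_1,…,a_n)` be any nonnegative integers. If
`y = (y_1,…,y_{n-1})` are nonnegative reals with `y_1 ≤ a_1`, `y_{j-1} + y_j ≤ a_j`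
for `j = 2,…,n-1`, and `y_{n-1} ≤ a_n`, and `h = ⌈y_1 + ⋯ + y_{n-1}⌉`, then `x^a` is
divisible by a product of `h` monomials from `{x_1 x_2, …, x_{n-1} x_n}`. -/
theorem divisible_of_path_system
    (K : Type*) [Field K] (n : ℕ) (hn : 2 ≤ n)
    (a : ℕ → ℕ) (y : ℕ → ℝ)
    (hy0 : ∀ i ∈ Finset.Icc 1 (n - 1), 0 ≤ y i)
    (hy1 : y 1 ≤ (a 1 : ℝ))
    (hy2 : ∀ j ∈ Finset.Icc 2 (n - 1), y (j - 1) + y j ≤ (a j : ℝ))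
    (hy3 : y (n - 1) ≤ (a n : ℝ)) :
    ∃ c : ℕ → ℕ,
      (∑ i ∈ Finset.Icc 1 (n - 1), c i = ⌈∑ i ∈ Finset.Icc 1 (n - 1), y i⌉₊) ∧
      (∏ i ∈ Finset.Icc 1 (n - 1), ((X i * X (i + 1) : MvPolynomial ℕ K) ^ c i)) ∣
        ∏ i ∈ Finset.Icc 1 n, (X i : MvPolynomial ℕ K) ^ a i :=
  divisible_of_path_system_general K n a y hy0 hy1 hy2 hy3
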